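/- Suppose given a commutative diagram of two long exact sequences of abelian groups ... → A_{i-1} → B_i → C_i → A_i → ... and ... → A'_{i-1} → B'_i → C'_i → A'_i → ... together with vertical maps A'_i → A_i, B'_i → B_i (an isomorphism), C'_i → C_i, commuting with the horizontal maps. Then there is a long exact sequence ... → A_{i-1} → C'_i → A'_i ⊕ C_i → A_i → C'_{i+1} → .... -/
import Mathlib


/-- Given a commutative diagram of two long exact sequences of abelian groups
`⋯ → A_{i-1} → B_i → C_i → A_i → ⋯` and `⋯ → A'_{i-1} → B'_i → C'_i → A'_i → ⋯`
together with vertical maps `A'_i → A_i`, `B'_i → B_i` (an isomorphism) and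
`C'_i → C_i` commuting with the horizontal maps, there is a long exact
sequence `⋯ → A_{i-1} → C'_i → A'_i ⊕ C_i → A_i → C'_{i+1} → ⋯`. -/
theorem diagram_chase_long_exact
    (A B C A' B' C' : ℤ → Type)
    [∀ i, AddCommGroup (A i)] [∀ i, AddCommGroup (B i)]
    [∀ i, AddCommGroup (C i)] [∀ i, AddCommGroup (A' i)]
    [∀ i, AddCommGroup (B' i)] [∀ i, AddCommGroup (C' i)]
    (f : ∀ i, B i →+ C i) (g : ∀ i, C i →+ A i) (h : ∀ i, A i →+ B (i + 1))
    (f' : ∀ i, B' i →+ C' i) (g' : ∀ i, C' i →+ A' i)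
    (h' : ∀ i, A' i →+ B' (i + 1))
    (α : ∀ i, A' i →+ A i) (βv : ∀ i, B' i →+ B i) (γ : ∀ i, C' i →+ C i)
    (hβ : ∀ i, Function.Bijective (βv i))
    -- exactness of the two rows
    (hex₁ : ∀ i, Function.Exact (f i) (g i))
    (hex₂ : ∀ i, Function.Exact (g i) (h i))
    (hex₃ : ∀ i, Function.Exact (h i) (f (i + 1)))
    (hex₁' : ∀ i, Function.Exact (f' i) (g' i))
    (hex₂' : ∀ i, Function.Exact (g' i) (h' i))
    (hex₃' : ∀ i, Function.Exact (h' i) (f' (i + 1)))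
    -- commutativity of the squares
    (hsq₁ : ∀ i (x : B' i), γ i (f' i x) = f i (βv i x))
    (hsq₂ : ∀ i (x : C' i), α i (g' i x) = g i (γ i x))
    (hsq₃ : ∀ i (x : A' i), βv (i + 1) (h' i x) = h i (α i x)) :
    ∃ (p : ∀ i, A i →+ C' (i + 1))
      (q : ∀ i, C' i →+ (A' i) × (C i))
      (r : ∀ i, (A' i) × (C i) →+ A i),
      (∀ i, Function.Exact (p i) (q (i + 1))) ∧
      (∀ i, Function.Exact (q i) (r i)) ∧
      (∀ i, Function.Exact (r i) (p i)) := by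

  classical
  let e : ∀ i, B' i ≃+ B i := fun i => AddEquiv.ofBijective (βv i) (hβ i)
  have he : ∀ i (x : B' i), e i x = βv i x := fun i x => rfl
  refine ⟨fun i => (f' (i+1)).comp (((e (i+1)).symm.toAddMonoidHom).comp (h i)),
    fun i => AddMonoidHom.prod (g' i) (γ i),
    fun i => (α i).comp (AddMonoidHom.fst _ _) - (g i).comp (AddMonoidHom.snd _ _),
    ?_, ?_, ?_⟩
  · intro i
    intro y
    constructor
    · intro hy
      simp only [AddMonoidHom.prod_apply, Prod.mk_eq_zero] at hy
      obtain ⟨hy1, hy2⟩ := hy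
      obtain ⟨b', hb'⟩ := (hex₁' (i+1) y).mp hy1
      have : f (i+1) (βv (i+1) b') = 0 := by
        rw [← hsq₁ (i+1) b', hb', hy2]
      obtain ⟨a, ha⟩ := (hex₃ i _).mp this
      refine ⟨a, ?_⟩
      simp only [AddMonoidHom.comp_apply, AddEquiv.coe_toAddMonoidHom]
      have : (e (i+1)).symm (h i a) = b' := by
        apply (e (i+1)).injective
        rw [AddEquiv.apply_symm_apply, he, ha]
      rw [this, hb']
    · rintro ⟨a, rfl⟩
      simp only [AddMonoidHom.comp_apply, AddEquiv.coe_toAddMonoidHom,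
        AddMonoidHom.prod_apply, Prod.mk_eq_zero]
      constructor
      · exact (hex₁' (i+1) _).mpr ⟨_, rfl⟩
      · rw [hsq₁ (i+1)]
        show f (i+1) (e (i+1) ((e (i+1)).symm (h i a))) = 0
        rw [AddEquiv.apply_symm_apply]
        exact (hex₃ i _).mpr ⟨a, rfl⟩
  · intro i y
    constructor
    · intro hy
      replace hy : (α i) y.1 = (g i) y.2 := sub_eq_zero.mp hy
      have hb0 : h' i y.1 = 0 := by
        apply (hβ (i+1)).1
        rw [hsq₃ i, map_zero, hy]
        exact (hex₂ i _).mpr ⟨y.2, rfl⟩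
      obtain ⟨c'0, hc'0⟩ := (hex₂' i _).mp hb0
      have : g i (y.2 - γ i c'0) = 0 := by
        rw [map_sub, ← hsq₂ i, hc'0, hy, sub_self]
      obtain ⟨b, hb⟩ := (hex₁ i _).mp this
      refine ⟨c'0 + f' i ((e i).symm b), ?_⟩
      simp only [AddMonoidHom.prod_apply, map_add]
      ext
      · show g' i c'0 + g' i (f' i ((e i).symm b)) = y.1
        rw [hc'0, (hex₁' i _).mpr ⟨_, rfl⟩, add_zero]
      · show γ i c'0 + γ i (f' i ((e i).symm b)) = y.2
        rw [hsq₁ i]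
        show γ i c'0 + f i (e i ((e i).symm b)) = y.2
        rw [AddEquiv.apply_symm_apply, hb]
        abel
    · rintro ⟨c', rfl⟩
      show (α i) ((g' i) c') - (g i) ((γ i) c') = 0
      rw [hsq₂ i c', sub_self]
  · intro i y
    constructor
    · intro hy
      simp only [AddMonoidHom.comp_apply, AddEquiv.coe_toAddMonoidHom] at hy
      obtain ⟨a', ha'⟩ := (hex₃' i _).mp hy
      have hha : h i (y - α i a') = 0 := by
        rw [map_sub, ← hsq₃ i, ha']
        show h i y - e (i+1) ((e (i+1)).symm (h i y)) = 0
        rw [AddEquiv.apply_symm_apply, sub_self]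
      obtain ⟨c, hc⟩ := (hex₂ i _).mp hha
      refine ⟨(a', -c), ?_⟩
      show (α i) a' - (g i) (-c) = y
      rw [map_neg, sub_neg_eq_add, hc]
      abel
    · rintro ⟨⟨a', c⟩, rfl⟩
      have h1 : (e (i+1)).symm (h i (α i a')) = h' i a' := by
        apply (e (i+1)).injective
        rw [AddEquiv.apply_symm_apply, he, hsq₃]
      have h2 : h i (g i c) = 0 := (hex₂ i _).mpr ⟨c, rfl⟩
      show (f' (i+1)) ((e (i+1)).symm ((h i) ((α i) a' - (g i) c))) = 0
      rw [map_sub, h2, sub_zero, h1]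
      exact (hex₃' i _).mpr ⟨a', rfl⟩
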